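/- arXiv:1402.6667 — 6 statements merged into one kernel-verified Lean document; each statement's English description precedes it below -/
import Mathlib

section
/- Let G be a finite abelian group generated by elements h₁, h₂, h₃ ∈ G. Define the linear map d : ℂ[G]⁴ → ℂ[G]² by d(a,b,c,d) = (a+b+c+d, a + h₁·b + h₂·c + h₃·d), where multiplication is in the group algebra. Then the image of d has dimension 2|G| - 1 and the kernel of d has dimension 2|G| + 1 over ℂ. -/
/-! The image of `d` is the hyperplane `{(u, v) | ε u = ε v}` of `ℂ[G]²`, where `ε : ℂ[G] → ℂ` is
the augmentation. Given such `(u, v)`, the difference `v - u` lies in the augmentation ideal, which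
is generated by `h₁ - 1, h₂ - 1, h₃ - 1` since the `g` with `g - 1` in that ideal form a subgroup
of `G`; so `v - u = b (h₁ - 1) + c (h₂ - 1) + d (h₃ - 1)` and `(u - b - c - d, b, c, d)` maps to
`(u, v)`. The dimensions then follow from rank–nullity. -/

open MonoidAlgebra

noncomputable def pillowD (G : Type*) [CommGroup G] (h1 h2 h3 : G) :
    (MonoidAlgebra ℂ G × MonoidAlgebra ℂ G × MonoidAlgebra ℂ G × MonoidAlgebra ℂ G) →ₗ[ℂ]
      (MonoidAlgebra ℂ G × MonoidAlgebra ℂ G) where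
  toFun x := (x.1 + x.2.1 + x.2.2.1 + x.2.2.2,
    x.1 + MonoidAlgebra.of ℂ G h1 * x.2.1 + MonoidAlgebra.of ℂ G h2 * x.2.2.1
      + MonoidAlgebra.of ℂ G h3 * x.2.2.2)
  map_add' x y := by
    simp only [Prod.fst_add, Prod.snd_add, Prod.mk_add_mk, Prod.mk.injEq, mul_add]
    constructor <;> ring
  map_smul' c x := by
    simp only [Prod.smul_fst, Prod.smul_snd, Prod.smul_mk, RingHom.id_apply, smul_add,
      mul_smul_comm, Prod.mk.injEq]

namespace MonoidAlgebra

variable (k G : Type*) [CommRing k] [Group G]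

noncomputable def augmentation : MonoidAlgebra k G →ₐ[k] k := lift k k G 1

noncomputable def augmentationDiff : Module.Dual k (MonoidAlgebra k G × MonoidAlgebra k G) :=
  (augmentation k G).toLinearMap.coprod (-(augmentation k G).toLinearMap)

variable {k G}

@[simp]
lemma augmentation_single (g : G) (c : k) : augmentation k G (single g c) = c := by
  simp [augmentation, lift_single]

@[simp]
lemma augmentationDiff_apply (u v : MonoidAlgebra k G) :
    augmentationDiff k G (u, v) = augmentation k G u - augmentation k G v := by
  simp [augmentationDiff, sub_eq_add_neg]

lemma augmentationDiff_ne_zero [Nontrivial k] : augmentationDiff k G ≠ 0 :=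
  fun h ↦ by simpa using LinearMap.congr_fun h ((1 : MonoidAlgebra k G), 0)

lemma of_sub_one_mem_of_mem_closure {I : Ideal (MonoidAlgebra k G)} {S : Set G}
    (hS : ∀ s ∈ S, of k G s - 1 ∈ I) {g : G} (hg : g ∈ Subgroup.closure S) :
    of k G g - 1 ∈ I := by
  induction hg using Subgroup.closure_induction with
  | mem s hs => exact hS s hs
  | one => rw [map_one, sub_self]; exact zero_mem I
  | mul x y _ _ hx hy =>
    have : of k G (x * y) - 1 = of k G x * (of k G y - 1) + (of k G x - 1) := by
      rw [map_mul]; noncomm_ring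
    rw [this]
    exact add_mem (I.mul_mem_left _ hy) hx
  | inv x _ hx =>
    have : of k G x⁻¹ - 1 = -(of k G x⁻¹ * (of k G x - 1)) := by
      rw [mul_sub, ← map_mul, inv_mul_cancel, map_one]; noncomm_ring
    rw [this]
    exact neg_mem (I.mul_mem_left _ hx)

lemma sub_algebraMap_augmentation_mem {I : Ideal (MonoidAlgebra k G)}
    (hI : ∀ g, of k G g - 1 ∈ I) (x : MonoidAlgebra k G) :
    x - algebraMap k _ (augmentation k G x) ∈ I := by
  induction x using induction_linear with
  | zero => simp
  | add x y hx hy => simpa [add_sub_add_comm] using add_mem hx hy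
  | single g c =>
    have : single g c - algebraMap k _ c = single 1 c * (of k G g - 1) := by
      simp [mul_sub, single_mul_single]
    rw [augmentation_single, this]
    exact I.mul_mem_left _ (hI g)

theorem ker_augmentation_eq_span {S : Set G} (hS : Subgroup.closure S = ⊤) :
    RingHom.ker (augmentation k G) = Ideal.span ((fun g ↦ of k G g - 1) '' S) := by
  apply le_antisymm
  · intro x hx
    have hgen (g : G) : of k G g - 1 ∈ Ideal.span ((fun g ↦ of k G g - 1) '' S) := by
      refine of_sub_one_mem_of_mem_closure (fun s hs ↦ Ideal.subset_span ?_)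
        (hS ▸ Subgroup.mem_top g)
      exact ⟨s, hs, rfl⟩
    have := sub_algebraMap_augmentation_mem hgen x
    rwa [RingHom.mem_ker.1 hx, map_zero, sub_zero] at this
  · rw [Ideal.span_le]
    rintro _ ⟨s, -, rfl⟩
    simp

end MonoidAlgebra

theorem range_pillowD {G : Type*} [CommGroup G] {h1 h2 h3 : G}
    (hgen : Subgroup.closure {h1, h2, h3} = ⊤) :
    LinearMap.range (pillowD G h1 h2 h3) = LinearMap.ker (augmentationDiff ℂ G) := by
  apply le_antisymm
  · rintro _ ⟨⟨a, b, c, d⟩, rfl⟩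
    simp [pillowD]
  · rintro ⟨u, v⟩ huv
    simp only [LinearMap.mem_ker, augmentationDiff_apply, sub_eq_zero] at huv
    have hmem : v - u ∈ RingHom.ker (augmentation ℂ G) := by
      rw [RingHom.mem_ker, map_sub, huv, sub_self]
    rw [ker_augmentation_eq_span hgen, Set.image_insert_eq, Set.image_insert_eq,
      Set.image_singleton] at hmem
    obtain ⟨b, c, d, hbcd⟩ := Submodule.mem_span_triple.1 hmem
    refine ⟨(u - b - c - d, b, c, d), ?_⟩
    simp only [pillowD, LinearMap.coe_mk, AddHom.coe_mk, smul_eq_mul, Prod.mk.injEq] at hbcd ⊢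
    constructor
    · ring
    · linear_combination hbcd

theorem pillowD_rank (G : Type*) [CommGroup G] [Fintype G] (h1 h2 h3 : G)
    (hgen : Subgroup.closure {h1, h2, h3} = ⊤) :
    Module.finrank ℂ (LinearMap.range (pillowD G h1 h2 h3)) = 2 * Fintype.card G - 1 ∧
    Module.finrank ℂ (LinearMap.ker (pillowD G h1 h2 h3)) = 2 * Fintype.card G + 1 := by
  have hdim : Module.finrank ℂ (MonoidAlgebra ℂ G) = Fintype.card G :=
    Module.finrank_eq_card_basis (basis G ℂ)
  have hcard : 0 < Fintype.card G := Fintype.card_pos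
  have hrange : Module.finrank ℂ (LinearMap.range (pillowD G h1 h2 h3)) =
      2 * Fintype.card G - 1 := by
    have := (augmentationDiff ℂ G).finrank_ker_add_one_of_ne_zero augmentationDiff_ne_zero
    rw [Module.finrank_prod, hdim] at this
    rw [range_pillowD hgen]
    omega
  refine ⟨hrange, ?_⟩
  have := (pillowD G h1 h2 h3).finrank_range_add_finrank_ker
  simp only [Module.finrank_prod, hdim, hrange] at this
  omega
end

section
/- Let G be a finite abelian group generated by h₁, h₂, h₃, and let d : ℂ[G]⁴ → ℂ[G]² be defined by d(a,b,c,d) = (a+b+c+d, a + h₁b + h₂c + h₃d). Then the image of d equals {(x, x + y) : x ∈ ℂ[G], y ∈ L}, where L is the (right) ideal of ℂ[G] generated by h₁-1, h₂-1, h₃-1. -/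
open MonoidAlgebra

/- After the change of variables `a = x - b - c - d`, the second coordinate minus the first
is a general element of the ideal `L`. -/
theorem pillowD_apply_sub (G : Type*) [CommGroup G] (h1 h2 h3 : G)
    (x b c d : MonoidAlgebra ℂ G) :
    pillowD G h1 h2 h3 (x - b - c - d, b, c, d) =
      (x, x + (b • (of ℂ G h1 - 1) + c • (of ℂ G h2 - 1) + d • (of ℂ G h3 - 1))) := by
  simp only [pillowD, LinearMap.coe_mk, AddHom.coe_mk, smul_eq_mul, Prod.mk.injEq]
  constructor <;> ring

theorem pillowD_range_general (G : Type*) [CommGroup G] (h1 h2 h3 : G) :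
    (LinearMap.range (pillowD G h1 h2 h3) : Set (MonoidAlgebra ℂ G × MonoidAlgebra ℂ G)) =
      {p | ∃ x : MonoidAlgebra ℂ G, ∃ y ∈ Ideal.span
        {MonoidAlgebra.of ℂ G h1 - 1, MonoidAlgebra.of ℂ G h2 - 1, MonoidAlgebra.of ℂ G h3 - 1},
        p = (x, x + y)} := by
  ext p
  simp only [SetLike.mem_coe, LinearMap.mem_range, Set.mem_ofPred_eq, Ideal.span,
    Submodule.mem_span_triple]
  constructor
  · rintro ⟨⟨a, b, c, d⟩, rfl⟩
    have ha : a = (a + b + c + d) - b - c - d := by abel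
    exact ⟨_, _, ⟨b, c, d, rfl⟩, by rw [ha, pillowD_apply_sub]⟩
  · rintro ⟨x, _, ⟨b, c, d, rfl⟩, rfl⟩
    exact ⟨_, pillowD_apply_sub G h1 h2 h3 x b c d⟩

theorem pillowD_range (G : Type*) [CommGroup G] [Fintype G] (h1 h2 h3 : G)
    (hgen : Subgroup.closure {h1, h2, h3} = ⊤) :
    (LinearMap.range (pillowD G h1 h2 h3) : Set (MonoidAlgebra ℂ G × MonoidAlgebra ℂ G)) =
      {p | ∃ x : MonoidAlgebra ℂ G, ∃ y ∈ Ideal.span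
        {MonoidAlgebra.of ℂ G h1 - 1, MonoidAlgebra.of ℂ G h2 - 1, MonoidAlgebra.of ℂ G h3 - 1},
        p = (x, x + y)} :=
  pillowD_range_general G h1 h2 h3
end

section
/- Let u, v be complex numbers on the unit circle, both different from 1. Let a = v - u⁻¹, b = u⁻¹ - 1, d = v - 1, and define Q = (1/(4i))·( b·conj(a) - a·conj(b) - v·b·conj(a) + a·conj(v·b) ). Then Q is a real number, Q > 0 if arg(u) + arg(v) < 2π, and Q < 0 if arg(u) + arg(v) > 2π, where arg takes values in (0, 2π). -/
open Real Complex

/-- Argument of a complex number normalized to lie in `[0, 2π)`;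
for a unit complex number different from `1` it lies in `(0, 2π)`. -/
noncomputable def arg2pi (z : ℂ) : ℝ :=
  if 0 ≤ Complex.arg z then Complex.arg z else Complex.arg z + 2 * π

/-!
On the unit circle `conj z = z⁻¹`, so `Q` is a rational expression in `u, v` and reduces to
`Im u + Im v - Im (u v) = sin α + sin β - sin (α + β)`, where `α = arg2pi u` and `β = arg2pi v`
lie in `(0, 2π)`.
This equals `4 sin (α/2) sin (β/2) sin ((α + β)/2)`, whose first two factors are positive and
whose last one has the sign of `2π - (α + β)`.
-/

lemma exp_arg2pi_mul_I {z : ℂ} (hz : ‖z‖ = 1) : cexp (arg2pi z * I) = z := by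
  have h := norm_mul_exp_arg_mul_I z
  rw [hz, ofReal_one, one_mul] at h
  unfold arg2pi
  split_ifs
  · exact h
  · rw [ofReal_add, add_mul, Complex.exp_add, h]
    push_cast
    rw [exp_two_pi_mul_I, mul_one]

lemma sin_arg2pi {z : ℂ} (hz : ‖z‖ = 1) : Real.sin (arg2pi z) = z.im := by
  rw [← exp_ofReal_mul_I_im, exp_arg2pi_mul_I hz]

lemma sin_arg2pi_add_arg2pi {u v : ℂ} (hu : ‖u‖ = 1) (hv : ‖v‖ = 1) :
    Real.sin (arg2pi u + arg2pi v) = (u * v).im := by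
  rw [← exp_ofReal_mul_I_im, ofReal_add, add_mul, Complex.exp_add, exp_arg2pi_mul_I hu,
    exp_arg2pi_mul_I hv]

lemma arg2pi_lt_two_pi (z : ℂ) : arg2pi z < 2 * π := by
  unfold arg2pi
  split_ifs <;> linarith [arg_le_pi z, pi_pos]

lemma arg2pi_pos {z : ℂ} (hz : ‖z‖ = 1) (hz1 : z ≠ 1) : 0 < arg2pi z := by
  have harg : arg z ≠ 0 := fun h0 ↦ hz1 <| by
    rw [← exp_arg2pi_mul_I hz, arg2pi, if_pos h0.ge, h0]
    simp
  unfold arg2pi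
  split_ifs with h
  · exact lt_of_le_of_ne h harg.symm
  · linarith [neg_pi_lt_arg z]

lemma hodge_form_eq {u v : ℂ} (hu : ‖u‖ = 1) (hv : ‖v‖ = 1) :
    (1 / (4 * I)) *
      ((u⁻¹ - 1) * (starRingEnd ℂ) (v - u⁻¹) - (v - u⁻¹) * (starRingEnd ℂ) (u⁻¹ - 1)
        - v * (u⁻¹ - 1) * (starRingEnd ℂ) (v - u⁻¹)
        + (v - u⁻¹) * (starRingEnd ℂ) (v * (u⁻¹ - 1))) =
      ((u.im + v.im - (u * v).im : ℝ) : ℂ) := by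
  have hu0 : u ≠ 0 := by rintro rfl; simp at hu
  have hv0 : v ≠ 0 := by rintro rfl; simp at hv
  push_cast
  simp only [im_eq_sub_conj, map_sub, map_mul, map_inv₀, map_one, ← inv_eq_conj hu,
    ← inv_eq_conj hv, inv_inv]
  field_simp
  ring

lemma sin_add_sin_sub_sin_add (x y : ℝ) :
    Real.sin x + Real.sin y - Real.sin (x + y) =
      4 * Real.sin (x / 2) * Real.sin (y / 2) * Real.sin ((x + y) / 2) := by
  have hx : x = 2 * (x / 2) := by ring
  have hy : y = 2 * (y / 2) := by ring
  have hxy : (x + y) / 2 = x / 2 + y / 2 := by ring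
  conv_lhs => rw [hx, hy, ← mul_add, Real.sin_two_mul, Real.sin_two_mul, Real.sin_two_mul]
  rw [hxy, Real.sin_add, Real.cos_add]
  linear_combination
    (-2 * Real.sin (x / 2) * Real.cos (x / 2)) * Real.sin_sq_add_cos_sq (y / 2) +
      (-2 * Real.sin (y / 2) * Real.cos (y / 2)) * Real.sin_sq_add_cos_sq (x / 2)

lemma sin_add_sin_sub_sin_add_pos {x y : ℝ} (hx : 0 < x) (hy : 0 < y) (hxy : x + y < 2 * π) :
    0 < Real.sin x + Real.sin y - Real.sin (x + y) := by
  rw [sin_add_sin_sub_sin_add]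
  have hx2 := sin_pos_of_pos_of_lt_pi (x := x / 2) (by linarith) (by linarith)
  have hy2 := sin_pos_of_pos_of_lt_pi (x := y / 2) (by linarith) (by linarith)
  have hxy2 := sin_pos_of_pos_of_lt_pi (x := (x + y) / 2) (by linarith) (by linarith)
  positivity

lemma sin_add_sin_sub_sin_add_neg {x y : ℝ} (hx : x < 2 * π) (hy : y < 2 * π)
    (hxy : 2 * π < x + y) :
    Real.sin x + Real.sin y - Real.sin (x + y) < 0 := by
  rw [sin_add_sin_sub_sin_add]
  have hx2 := sin_pos_of_pos_of_lt_pi (x := x / 2) (by linarith) (by linarith)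
  have hy2 := sin_pos_of_pos_of_lt_pi (x := y / 2) (by linarith) (by linarith)
  have hxy2 : Real.sin ((x + y) / 2) < 0 := by
    rw [← Real.sin_sub_two_pi]
    exact sin_neg_of_neg_of_neg_pi_lt (by linarith) (by linarith)
  exact mul_neg_of_pos_of_neg (by positivity) hxy2

theorem hodge_form_sign_on_Ha (u v : ℂ) (hu : ‖u‖ = 1) (hv : ‖v‖ = 1)
    (hu1 : u ≠ 1) (hv1 : v ≠ 1) :
    let a : ℂ := v - u⁻¹
    let b : ℂ := u⁻¹ - 1
    let d : ℂ := v - 1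
    let Q : ℂ := (1 / (4 * Complex.I)) *
      (b * (starRingEnd ℂ) a - a * (starRingEnd ℂ) b
        - v * b * (starRingEnd ℂ) a + a * (starRingEnd ℂ) (v * b))
    Q.im = 0 ∧
    (arg2pi u + arg2pi v < 2 * π → 0 < Q.re) ∧
    (2 * π < arg2pi u + arg2pi v → Q.re < 0) := by
  intro a b _ Q
  have hQ : Q = ((Real.sin (arg2pi u) + Real.sin (arg2pi v)
      - Real.sin (arg2pi u + arg2pi v) : ℝ) : ℂ) := by
    rw [sin_arg2pi hu, sin_arg2pi hv, sin_arg2pi_add_arg2pi hu hv]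
    exact hodge_form_eq hu hv
  rw [hQ, ofReal_re, ofReal_im]
  exact ⟨rfl,
    sin_add_sin_sub_sin_add_pos (arg2pi_pos hu hu1) (arg2pi_pos hv hv1),
    sin_add_sin_sub_sin_add_neg (arg2pi_lt_two_pi u) (arg2pi_lt_two_pi v)⟩
end

section
/- Let w₁, w₂, w₃ be unit complex numbers and let A be the Hermitian form on ℂ⁴ given by A((a,b,c,d),(a',b',c',d')) = (1/(4i))·( b·conj(a') - a·conj(b') + d·conj(c') - c·conj(d') - w₁·b·conj(a') + a·conj(w₁·b') - w₃·d·conj(w₂·c') + w₂·c·conj(w₃·d') ). Let V = {(a,b,c,d) ∈ ℂ⁴ : a+b+c+d=0, a+w₁b+w₂c+w₃d=0}, V_a = {v ∈ V : c = 0} and V_{a'} = {v ∈ V : a = 0}. Then for all x ∈ V_a and y ∈ V_{a'}, A(x,y) = 0. -/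
/-!
With `x 2 = 0` and `y 0 = 0` only two terms of the form survive, and
`4i · A(x, y) = x₀ ȳ₁ (w̄₁ - 1) + x₃ ȳ₂ (1 - w₃ w̄₂)`.
Eliminating `x₁` from the two equations of `V` gives `(w₁ - 1) x₀ = (w₃ - w₁) x₃`, and
eliminating `y₃` gives `(w₃ - w₁) y₁ + (w₃ - w₂) y₂ = 0`. Since `w̄ = w⁻¹` for `w = w₁, w₃`, the
first relation turns the sum into `w₃ x₃ · conj((w₃ - w₁) y₁ + (w₃ - w₂) y₂)`, which vanishes by
the second.
-/

open Complex

/-- The Hodge (area) Hermitian form on the ρ-isotypic component. -/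
noncomputable def hodgeForm (w1 w2 w3 : ℂ) (x y : Fin 4 → ℂ) : ℂ :=
  (1 / (4 * Complex.I)) *
    (x 1 * (starRingEnd ℂ) (y 0) - x 0 * (starRingEnd ℂ) (y 1)
      + x 3 * (starRingEnd ℂ) (y 2) - x 2 * (starRingEnd ℂ) (y 3)
      - w1 * x 1 * (starRingEnd ℂ) (y 0) + x 0 * (starRingEnd ℂ) (w1 * y 1)
      - w3 * x 3 * (starRingEnd ℂ) (w2 * y 2) + w2 * x 2 * (starRingEnd ℂ) (w3 * y 3))

open ComplexConjugate

lemma Complex.mul_conj_eq_one_of_norm_eq_one {z : ℂ} (hz : ‖z‖ = 1) : z * conj z = 1 := by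
  rw [mul_conj', hz]
  norm_num

lemma hodgeForm_eq_of_apply_two_eq_zero_of_apply_zero_eq_zero (w1 w2 w3 : ℂ) {x y : Fin 4 → ℂ}
    (hxc : x 2 = 0) (hya : y 0 = 0) :
    hodgeForm w1 w2 w3 x y =
      1 / (4 * I) *
        (x 0 * conj (y 1) * (conj w1 - 1) + x 3 * conj (y 2) * (1 - w3 * conj w2)) := by
  simp only [hodgeForm, hxc, hya, map_zero, map_mul]
  ring

lemma area_terms_eq_mul_conj {w1 w2 w3 a b c d : ℂ} (hw1 : ‖w1‖ = 1) (hw3 : ‖w3‖ = 1)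
    (had : (w1 - 1) * a = (w3 - w1) * d) :
    a * conj b * (conj w1 - 1) + d * conj c * (1 - w3 * conj w2) =
      w3 * d * conj ((w3 - w1) * b + (w3 - w2) * c) := by
  have hv1 := mul_conj_eq_one_of_norm_eq_one hw1
  have hv3 := mul_conj_eq_one_of_norm_eq_one hw3
  simp only [map_add, map_sub, map_mul]
  linear_combination -conj b * conj w1 * had + conj b * (a + d) * hv1
    - (d * conj c + d * conj b) * hv3

theorem hodge_form_orthogonal_general (w1 w2 w3 : ℂ)
    (hw1 : ‖w1‖ = 1) (hw3 : ‖w3‖ = 1)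
    (x y : Fin 4 → ℂ)
    (hx1 : x 0 + x 1 + x 2 + x 3 = 0) (hx2 : x 0 + w1 * x 1 + w2 * x 2 + w3 * x 3 = 0)
    (hy1 : y 0 + y 1 + y 2 + y 3 = 0) (hy2 : y 0 + w1 * y 1 + w2 * y 2 + w3 * y 3 = 0)
    (hxc : x 2 = 0) (hya : y 0 = 0) :
    hodgeForm w1 w2 w3 x y = 0 := by
  have hx : (w1 - 1) * x 0 = (w3 - w1) * x 3 := by
    linear_combination w1 * hx1 - hx2 + (w2 - w1) * hxc
  have hy : (w3 - w1) * y 1 + (w3 - w2) * y 2 = 0 := by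
    linear_combination w3 * hy1 - hy2 + (1 - w3) * hya
  rw [hodgeForm_eq_of_apply_two_eq_zero_of_apply_zero_eq_zero w1 w2 w3 hxc hya,
    area_terms_eq_mul_conj hw1 hw3 hx, hy, map_zero, mul_zero, mul_zero]

theorem hodge_form_orthogonal (w1 w2 w3 : ℂ)
    (hw1 : ‖w1‖ = 1) (hw2 : ‖w2‖ = 1) (hw3 : ‖w3‖ = 1)
    (x y : Fin 4 → ℂ)
    (hx1 : x 0 + x 1 + x 2 + x 3 = 0) (hx2 : x 0 + w1 * x 1 + w2 * x 2 + w3 * x 3 = 0)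
    (hy1 : y 0 + y 1 + y 2 + y 3 = 0) (hy2 : y 0 + w1 * y 1 + w2 * y 2 + w3 * y 3 = 0)
    (hxc : x 2 = 0) (hya : y 0 = 0) :
    hodgeForm w1 w2 w3 x y = 0 :=
  hodge_form_orthogonal_general w1 w2 w3 hw1 hw3 x y hx1 hx2 hy1 hy2 hxc hya
end

section
/- Let z₁, z₂, z₃, z₄ be unit complex numbers with z₁z₂z₃z₄ = 1, and assume z₁z₂ ≠ 1 (equivalently z₃z₄ ≠ 1). Let V = {(a,b,c,d) ∈ ℂ⁴ : a+b+c+d = 0, a + z₂b + z₂z₃c + z₂z₃z₄d = 0}. Then the linear map T : ℂ⁴ → ℂ⁴ defined by T(a,b,c,d) = (z₁z₂·a, b + a - z₁·a, c, d + z₁·a - z₁z₂·a) maps V into V, and the restriction of T to V has eigenvalues z₁z₂ and 1. -/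
theorem gamma1_action_eigenvalues (z1 z2 z3 z4 : ℂ)
    (h1 : ‖z1‖ = 1) (h2 : ‖z2‖ = 1) (h3 : ‖z3‖ = 1) (h4 : ‖z4‖ = 1)
    (hprod : z1 * z2 * z3 * z4 = 1) (h12 : z1 * z2 ≠ 1) :
    let V : Set (Fin 4 → ℂ) := {v | v 0 + v 1 + v 2 + v 3 = 0 ∧
      v 0 + z2 * v 1 + z2 * z3 * v 2 + z2 * z3 * z4 * v 3 = 0}
    let T : (Fin 4 → ℂ) → (Fin 4 → ℂ) := fun v =>
      ![z1 * z2 * v 0, v 1 + v 0 - z1 * v 0, v 2, v 3 + z1 * v 0 - z1 * z2 * v 0]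
    (∀ v ∈ V, T v ∈ V) ∧
    (∃ v ∈ V, v ≠ 0 ∧ T v = (z1 * z2) • v) ∧
    (∃ v ∈ V, v ≠ 0 ∧ T v = v) := by
  intro V T
  refine ⟨?_, ?_, ?_⟩
  · rintro v ⟨e1, e2⟩
    constructor
    · show z1 * z2 * v 0 + (v 1 + v 0 - z1 * v 0) + v 2 +
        (v 3 + z1 * v 0 - z1 * z2 * v 0) = 0
      linear_combination e1
    · show z1 * z2 * v 0 + z2 * (v 1 + v 0 - z1 * v 0) + z2 * z3 * v 2 +
        z2 * z3 * z4 * (v 3 + z1 * v 0 - z1 * z2 * v 0) = 0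
      linear_combination e2 + (1 - z2) * (v 0) * hprod
  · refine ⟨![1 - z1*z2, z1 - 1, 0, z1*z2 - z1], ⟨?_, ?_⟩, ?_, ?_⟩
    · show (1 - z1*z2) + (z1 - 1) + 0 + (z1*z2 - z1) = 0
      ring
    · show (1 - z1*z2) + z2 * (z1 - 1) + z2 * z3 * 0 +
        z2 * z3 * z4 * (z1*z2 - z1) = 0
      linear_combination (z2 - 1) * hprod
    · intro h
      have h0 : (1 : ℂ) - z1*z2 = 0 := congrFun h 0
      exact h12 (by linear_combination -h0)
    · funext i
      fin_cases i <;> simp [T, Pi.smul_apply, smul_eq_mul] <;> ring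
  · refine ⟨![0, z3*z4 - z3, 1 - z3*z4, z3 - 1], ⟨?_, ?_⟩, ?_, ?_⟩
    · show (0 : ℂ) + (z3*z4 - z3) + (1 - z3*z4) + (z3 - 1) = 0
      ring
    · show (0 : ℂ) + z2 * (z3*z4 - z3) + z2 * z3 * (1 - z3*z4) +
        z2 * z3 * z4 * (z3 - 1) = 0
      ring
    · intro h
      have ha : (1 : ℂ) - z3*z4 = 0 := congrFun h 2
      have hb : z3 - 1 = 0 := congrFun h 3
      have hz3 : z3 = 1 := by linear_combination hb
      have hz4 : z4 = 1 := by
        have : z3 * z4 = 1 := by linear_combination -ha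
        rw [hz3, one_mul] at this; exact this
      exact h12 (by rw [hz3, hz4] at hprod; linear_combination hprod)
    · funext i
      fin_cases i <;> simp [T]
end

section
/- Let z₁, z₂, z₃, z₄ be unit complex numbers with z₁z₂z₃z₄ = 1 and z₁z₂ ≠ 1. Define V = {(a,b,c,d) ∈ ℂ⁴ : a+b+c+d = 0, a + z₂b + z₂z₃c + z₂z₃z₄d = 0}, the Hermitian form A((a,b,c,d),(a',b',c',d')) = (1/(4i))( b·conj(a') - a·conj(b') + d·conj(c') - c·conj(d') - z₂b·conj(a') + a·conj(z₂b') - z₂z₃z₄d·conj(z₂z₃c') + z₂z₃c·conj(z₂z₃z₄d') ), and T(a,b,c,d) = (z₁z₂a, b + a - z₁a, c, d + z₁a - z₁z₂a). Then for all x, y ∈ V, A(Tx, Ty) = A(x, y). -/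
set_option maxHeartbeats 1000000 in
theorem hodge_form_invariant (z1 z2 z3 z4 : ℂ)
    (h1 : ‖z1‖ = 1) (h2 : ‖z2‖ = 1) (h3 : ‖z3‖ = 1) (h4 : ‖z4‖ = 1)
    (hprod : z1 * z2 * z3 * z4 = 1) (h12 : z1 * z2 ≠ 1) :
    let V : Set (Fin 4 → ℂ) := {v | v 0 + v 1 + v 2 + v 3 = 0 ∧
      v 0 + z2 * v 1 + z2 * z3 * v 2 + z2 * z3 * z4 * v 3 = 0}
    let T : (Fin 4 → ℂ) → (Fin 4 → ℂ) := fun v =>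
      ![z1 * z2 * v 0, v 1 + v 0 - z1 * v 0, v 2, v 3 + z1 * v 0 - z1 * z2 * v 0]
    ∀ x ∈ V, ∀ y ∈ V,
      hodgeForm z2 (z2 * z3) (z2 * z3 * z4) (T x) (T y) =
        hodgeForm z2 (z2 * z3) (z2 * z3 * z4) x y := by
  intro V T x hx y hy
  obtain ⟨hx1, hx2⟩ := hx
  obtain ⟨hy1, hy2⟩ := hy
  have hz1 : z1 ≠ 0 := by intro h; rw [h] at h1; simp at h1
  have hz2 : z2 ≠ 0 := by intro h; rw [h] at h2; simp at h2
  have hz3 : z3 ≠ 0 := by intro h; rw [h] at h3; simp at h3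
  have hz4 : z4 ≠ 0 := by intro h; rw [h] at h4; simp at h4
  have h12' : (1 : ℂ) - z1 * z2 ≠ 0 := sub_ne_zero.mpr (Ne.symm h12)
  have hAc1 : (starRingEnd ℂ) z1 = z2 * z3 * z4 := by
    rw [← Complex.inv_eq_conj h1]
    field_simp
    linear_combination -hprod
  have hAc2 : (starRingEnd ℂ) z2 = z1 * z3 * z4 := by
    rw [← Complex.inv_eq_conj h2]
    field_simp
    linear_combination -hprod
  have hAc3 : (starRingEnd ℂ) z3 = z1 * z2 * z4 := by
    rw [← Complex.inv_eq_conj h3]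
    field_simp
    linear_combination -hprod
  have hAc4 : (starRingEnd ℂ) z4 = z1 * z2 * z3 := by
    rw [← Complex.inv_eq_conj h4]
    field_simp
    linear_combination -hprod
  have hz4e : z4 = (z1 * z2 * z3)⁻¹ := by
    field_simp
    linear_combination hprod
  -- x side: parametrize
  have hE : (1 - z1) * x 0 + (1 - z1 * z2) * x 1 + (1 - z1 * z2 * z3) * x 2 = 0 := by
    linear_combination z1 * z2 * z3 * z4 * hx1 - z1 * hx2 - (x 0 + x 1 + x 2) * hprod
  obtain ⟨s, ha⟩ : ∃ s, x 0 = (1 - z1 * z2) * s :=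
    ⟨x 0 / (1 - z1 * z2), by field_simp⟩
  obtain ⟨t, hct⟩ : ∃ t, x 2 = (1 - z1 * z2) * t :=
    ⟨x 2 / (1 - z1 * z2), by field_simp⟩
  have hb : x 1 = -(1 - z1) * s - (1 - z1 * z2 * z3) * t := by
    apply mul_left_cancel₀ h12'
    linear_combination hE - (1 - z1) * ha - (1 - z1 * z2 * z3) * hct
  have hd : x 3 = -x 0 - x 1 - x 2 := by linear_combination hx1
  -- y side (conjugated)
  have hy1c := congrArg (starRingEnd ℂ) hy1
  have hy2c := congrArg (starRingEnd ℂ) hy2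
  simp only [map_add, map_mul, map_zero, hAc1, hAc2, hAc3, hAc4] at hy1c hy2c
  set A : ℂ := (starRingEnd ℂ) (y 0) with hA0
  set B : ℂ := (starRingEnd ℂ) (y 1) with hB0
  set C : ℂ := (starRingEnd ℂ) (y 2) with hC0
  set D : ℂ := (starRingEnd ℂ) (y 3) with hD0
  have hE' : (1 - z1) * A + (z1 * z3 * z4 - z1) * B + (z1 * z4 - z1) * C = 0 := by
    linear_combination hy2c - z1 * hy1c
      - (z1 * z4 * C + z1 * D * (z1 * z2 * z3 * z4 + 1)) * hprod
  have h34 : z3 * z4 ≠ 1 := by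
    intro h
    apply h12
    calc z1 * z2 = z1 * z2 * (z3 * z4) := by rw [h]; ring
      _ = 1 := by linear_combination hprod
  have hδy : z1 * z3 * z4 - z1 ≠ 0 := by
    intro h
    exact h34 (mul_left_cancel₀ hz1 (by linear_combination h))
  obtain ⟨S, hA⟩ : ∃ S, A = (z1 * z3 * z4 - z1) * S :=
    ⟨A / (z1 * z3 * z4 - z1), by field_simp⟩
  obtain ⟨U, hC⟩ : ∃ U, C = (z1 * z3 * z4 - z1) * U :=
    ⟨C / (z1 * z3 * z4 - z1), by field_simp⟩
  have hB : B = -(1 - z1) * S - (z1 * z4 - z1) * U := by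
    apply mul_left_cancel₀ hδy
    linear_combination hE' - (1 - z1) * hA - (z1 * z4 - z1) * hC
  have hD : D = -A - B - C := by linear_combination hy1c
  simp only [hodgeForm, T, Matrix.cons_val_zero, Matrix.cons_val_one, Matrix.head_cons,
    Matrix.cons_val_two, Matrix.tail_cons, Matrix.cons_val_three, map_add, map_mul, map_sub,
    hAc1, hAc2, hAc3, hAc4, ← hA0, ← hB0, ← hC0, ← hD0]
  rw [hd, hD, hb, hB, ha, hA, hct, hC]
  linear_combination (1 / (4 * Complex.I)) * (s*S + z1*t*S + (-1)*z1*s*U + z1*z4*s*U + (-1)*z1*z3*z4*t*S + (-2)*z1*z3*z4*s*S + (-1)*z1*z2*t*S + (-3)*z1*z2*s*S + (2)*z1*z2*z3*z4*s*S + z1*z2*z3^2*z4^2*t*S + z1^2*s*U + (-1)*z1^2*s*S + (2)*z1^2*z3*z4*s*S + (-1)*z1^2*z3*z4^2*s*U + z1^2*z2*s*U + (2)*z1^2*z2*s*S + (-2)*z1^2*z2*z4*s*U + (-1)*z1^2*z2*z3*t*S + z1^2*z2*z3*z4*t*S + (2)*z1^2*z2*z3*z4*s*S + z1^2*z2*z3*z4^2*s*U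 + z1^2*z2*z3^2*z4*t*S + (-1)*z1^2*z2*z3^2*z4^2*t*S + (-2)*z1^2*z2*z3^2*z4^2*s*S + z1^2*z2^2*s*S + z1^2*z2^2*z3*t*S + (-2)*z1^2*z2^2*z3*z4*s*S + (-1)*z1^2*z2^2*z3^2*z4*t*S + z1^2*z2^2*z3^2*z4^2*s*S + (-1)*z1^3*z2*s*U + (-2)*z1^3*z2*z3*z4*s*S + (2)*z1^3*z2*z3*z4^2*s*U + z1^3*z2*z3^2*z4^2*s*S + (-1)*z1^3*z2*z3^2*z4^3*s*U + z1^3*z2^2*z4*s*U + (-2)*z1^3*z2^2*z3*z4^2*s*U + (-1)*z1^3*z2^2*z3^2*z4*t*S + z1^3*z2^2*z3^2*z4^3*s*U + (2)*z1^3*z2^2*z3^3*z4^2*t*S + (-1)*z1^3*z2^2*z3^4*z4^3*t*S + z1^3*z2^3*z3^2*z4*t*S + (-2)*z1^3*z2^3*z3^3*z4^2*t*S + z1^3*z2^3*z3^4*z4^3*t*S + (-1)*z1^4*z2^2*z3*z4^2*s*U + z1^4*z2^2*z3^2*z4^3*s*U + z1^4*z2^3*z3*z4^2*s*U + (-1)*z1^4*z2^3*z3^2*z4^3*s*U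 + (-1)*z1^4*z2^3*z3^3*z4^2*t*S + (2)*z1^4*z2^3*z3^4*z4^3*t*S + (-1)*z1^4*z2^3*z3^5*z4^4*t*S + z1^4*z2^4*z3^3*z4^2*t*S + (-1)*z1^4*z2^4*z3^4*z4^3*t*S + (-1)*z1^5*z2^4*z3^4*z4^3*t*S + z1^5*z2^4*z3^5*z4^4*t*S) * hprod
end
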